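/- Let k be a field of characteristic 2 and let A, B be disjoint subsets of {1,…,n}. Set P = P(A,B) and let Q be any ideal of R generated by polynomials involving only the variables {x_i, y_i : i ∈ B} (i.e., Q is the extension to R of an ideal of the subring k[x_i, y_i : i ∈ B]). Then (P^{[2]} + Q) ∩ (P^{[2]} + (ω_A)) = P^{[2]} + Q·(ω_A). -/

import Mathlib

/-!
Write `ω = ∏_{i ∈ A} x_i y_i`. In characteristic `2` the Frobenius power `P(A,B)^{[2]}` is
generated by the squares `x_i², y_i²` (`i ∈ A`) together with the `f_{a,b}²` (`a, b ∈ B`), and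
the latter, like the generators of `Q`, involve no variable indexed by `A`.

Grade the polynomial ring by the exponents of the variables indexed by `A` and project onto the
component in which each of them occurs exactly once. The projection kills every multiple of
`x_i²` and `y_i²`, commutes with multiplication by polynomials free of these variables, and takes
values in `(ω)`; hence it maps `(x_i², y_i² : i ∈ A) + G` into `G·(ω)` whenever `G` is generated by
such polynomials. A multiple of `ω` differs from its projection by an element of
`(x_i², y_i² : i ∈ A)`, and the modular law for ideals gives the theorem.
-/

open MvPolynomial

noncomputable section

namespace BEI

/-- The polynomial ring `k[x_1,…,x_n,y_1,…,y_n]`: variables `Sum.inl i` are the `x_i`,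
variables `Sum.inr i` are the `y_i`. -/
abbrev Ring' (k : Type*) [CommRing k] (n : ℕ) : Type _ := MvPolynomial (Fin n ⊕ Fin n) k

variable {k : Type*} [CommRing k] {n : ℕ}

/-- The variable `x_i`. -/
def xv (i : Fin n) : Ring' k n := X (Sum.inl i)

/-- The variable `y_i`. -/
def yv (i : Fin n) : Ring' k n := X (Sum.inr i)

/-- The binomial `f_{i,j} = x_i y_j - x_j y_i`. -/
def fb (i j : Fin n) : Ring' k n := xv i * yv j - xv j * yv i

/-- The Frobenius power `I^{[p]}`, the ideal generated by the `p`-th powers of all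
elements of `I`. -/
def frobPow {A : Type*} [CommSemiring A] (I : Ideal A) (p : ℕ) : Ideal A :=
  Ideal.span ((· ^ p) '' (I : Set A))

/-- The ideal `P(A,B)`, generated by `{x_i, y_i : i ∈ A}` together with all `f_{a,b}` for
distinct `a, b ∈ B`. -/
def PAB (A B : Finset (Fin n)) : Ideal (Ring' k n) :=
  Ideal.span
    ({g | ∃ i ∈ A, g = xv i ∨ g = yv i} ∪
      {g | ∃ a ∈ B, ∃ b ∈ B, a ≠ b ∧ g = fb a b})

/-- The monomial `ω_A = ∏_{i ∈ A} x_i y_i`. -/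
def omegaA (A : Finset (Fin n)) : Ring' k n := ∏ i ∈ A, (xv i * yv i)

end BEI

namespace MvPolynomial

variable {σ R : Type*} [CommRing R] (s : Finset σ)

theorem prod_X_eq_monomial :
    ∏ v ∈ s, X v = (monomial (∑ v ∈ s, Finsupp.single v 1) 1 : MvPolynomial σ R) :=
  (monomial_sum_one s _).symm

variable [DecidableEq σ]

def restrictWeight : σ → σ →₀ ℕ := fun v => if v ∈ s then Finsupp.single v 1 else 0

theorem weight_restrictWeight (d : σ →₀ ℕ) :
    Finsupp.weight (restrictWeight s) d = d.filter (· ∈ s) := by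
  ext u
  simp only [Finsupp.weight_apply, Finsupp.filter_apply, restrictWeight, Finsupp.coe_finsetSum,
    Finset.sum_apply, Finsupp.sum]
  rw [Finset.sum_eq_single u]
  · split_ifs <;> simp
  · intro c _ hcu
    split_ifs <;> simp [hcu]
  · intro hu
    simp_all

theorem weight_restrictWeight_sum_single :
    Finsupp.weight (restrictWeight s) (∑ v ∈ s, Finsupp.single v 1) =
      ∑ v ∈ s, Finsupp.single v 1 := by
  rw [map_sum]
  refine Finset.sum_congr rfl fun v hv => ?_
  rw [Finsupp.weight_single, restrictWeight, if_pos hv, one_smul]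

theorem isWeightedHomogeneous_zero_of_disjoint_vars {g : MvPolynomial σ R}
    (hg : Disjoint g.vars s) : IsWeightedHomogeneous (restrictWeight s) g 0 := by
  intro d hd
  rw [weight_restrictWeight, Finsupp.filter_eq_zero_iff]
  intro v hv
  by_contra hdv
  exact Finset.disjoint_left.mp hg ((mem_vars_iff_mem_support v).mpr
    ⟨d, mem_support_iff.mpr hd, Finsupp.mem_support_iff.mpr hdv⟩) hv

/-- The part of a polynomial made of the monomials in which each variable of `s` occurs exactly
once. -/
def multilinearComponent : MvPolynomial σ R →ₗ[R] MvPolynomial σ R :=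
  weightedHomogeneousComponent (restrictWeight s) (∑ v ∈ s, Finsupp.single v 1)

attribute [local instance] weightedGradedAlgebra

theorem coe_decompose_eq_multilinearComponent (p : MvPolynomial σ R) :
    (DirectSum.decompose (weightedHomogeneousSubmodule R (restrictWeight s)) p
      (∑ v ∈ s, Finsupp.single v 1) : MvPolynomial σ R) = multilinearComponent s p :=
  weightedDecomposition.decompose'_apply R _ p _

theorem multilinearComponent_mul_of_disjoint_vars (f : MvPolynomial σ R) {g : MvPolynomial σ R}
    (hg : Disjoint g.vars s) :
    multilinearComponent s (f * g) = multilinearComponent s f * g := by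
  rw [← coe_decompose_eq_multilinearComponent, ← coe_decompose_eq_multilinearComponent]
  exact DirectSum.coe_decompose_mul_of_right_mem_zero _
    (isWeightedHomogeneous_zero_of_disjoint_vars s hg)

theorem multilinearComponent_mul_X_sq (f : MvPolynomial σ R) {v : σ} (hv : v ∈ s) :
    multilinearComponent s (f * X v ^ 2) = 0 := by
  have hdeg : IsWeightedHomogeneous (restrictWeight s) (X v ^ 2 : MvPolynomial σ R)
      (Finsupp.single v 2) := by
    simpa [restrictWeight, hv] using (isWeightedHomogeneous_X R (restrictWeight s) v).pow 2
  rw [← coe_decompose_eq_multilinearComponent]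
  refine DirectSum.coe_decompose_mul_of_right_mem_of_not_le _ hdeg fun h => ?_
  simpa [Finsupp.finsetSum_apply, Finsupp.single_apply, hv] using h v

theorem prod_X_dvd_multilinearComponent (f : MvPolynomial σ R) :
    ∏ v ∈ s, X v ∣ multilinearComponent s f := by
  rw [multilinearComponent, weightedHomogeneousComponent_apply]
  refine Finset.dvd_sum fun d hd => ?_
  rw [Finset.mem_filter, weight_restrictWeight] at hd
  have hle : d.filter (· ∈ s) ≤ d := fun u => by
    rw [Finsupp.filter_apply]
    split_ifs <;> simp
  rw [prod_X_eq_monomial, ← hd.2, ← add_tsub_cancel_of_le hle, ← one_mul (coeff _ f),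
    ← monomial_mul, add_tsub_cancel_of_le hle]
  exact dvd_mul_right _ _

theorem prod_X_mul_sub_multilinearComponent_mem (c : MvPolynomial σ R) :
    (∏ v ∈ s, X v) * c - multilinearComponent s ((∏ v ∈ s, X v) * c) ∈
      Ideal.span ((X · ^ 2) '' s) := by
  induction c using MvPolynomial.induction_on' with
  | add p q hp hq =>
    rw [mul_add, map_add, add_sub_add_comm]
    exact add_mem hp hq
  | monomial e a =>
    rw [prod_X_eq_monomial, monomial_mul, one_mul]
    set d := ∑ v ∈ s, Finsupp.single v 1 with hd
    have hdeg := isWeightedHomogeneous_monomial (restrictWeight s) (d + e) a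
      (by rw [map_add, weight_restrictWeight_sum_single, weight_restrictWeight])
    by_cases he : e.filter (· ∈ s) = 0
    · rw [he, add_zero] at hdeg
      rw [multilinearComponent, hdeg.weightedHomogeneousComponent_same, sub_self]
      exact zero_mem _
    · rw [multilinearComponent, hdeg.weightedHomogeneousComponent_ne _ (by simpa using he),
        sub_zero]
      obtain ⟨v, hv, hev⟩ : ∃ v ∈ s, e v ≠ 0 := by
        simpa [Finsupp.filter_eq_zero_iff] using he
      have hdv : d v = 1 := by simp [hd, Finsupp.single_apply, hv]
      have hle : Finsupp.single v 2 ≤ d + e :=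
        Finsupp.single_le_iff.mpr (by rw [Finsupp.add_apply, hdv]; omega)
      rw [← tsub_add_cancel_of_le hle, ← mul_one a, ← monomial_mul, ← X_pow_eq_monomial]
      exact Ideal.mul_mem_left _ _ (Ideal.subset_span ⟨v, hv, rfl⟩)

theorem multilinearComponent_mem_span_mul_of_mem {T : Set (MvPolynomial σ R)}
    (hT : ∀ g ∈ T, Disjoint g.vars s) {p : MvPolynomial σ R}
    (hp : p ∈ Ideal.span ((X · ^ 2) '' s) ⊔ Ideal.span T) :
    multilinearComponent s p ∈ Ideal.span T * Ideal.span {∏ v ∈ s, X v} := by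
  rw [← Ideal.span_union] at hp
  suffices ∀ r, multilinearComponent s (r * p) ∈ Ideal.span T * Ideal.span {∏ v ∈ s, X v} by
    simpa using this 1
  induction hp using Submodule.span_induction with
  | mem g hg =>
    intro r
    rcases hg with ⟨v, hv, rfl⟩ | hg
    · rw [multilinearComponent_mul_X_sq s r hv]
      exact zero_mem _
    · obtain ⟨t, ht⟩ := prod_X_dvd_multilinearComponent s r
      rw [multilinearComponent_mul_of_disjoint_vars s r (hT g hg), ht,
        show (∏ v ∈ s, X v) * t * g = g * t * ∏ v ∈ s, X v by ring]
      exact Ideal.mul_mem_mul (Ideal.mul_mem_right _ _ (Ideal.subset_span hg))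
        (Ideal.mem_span_singleton_self _)
  | zero =>
    intro r
    rw [mul_zero, map_zero]
    exact zero_mem _
  | add x y _ _ hx hy =>
    intro r
    rw [mul_add, map_add]
    exact add_mem (hx r) (hy r)
  | smul a x _ hx =>
    intro r
    rw [smul_eq_mul, ← mul_assoc]
    exact hx (r * a)

theorem span_X_sq_sup_inf_span_prod_X_le {T : Set (MvPolynomial σ R)}
    (hT : ∀ g ∈ T, Disjoint g.vars s) :
    (Ideal.span ((X · ^ 2) '' s) ⊔ Ideal.span T) ⊓ Ideal.span {∏ v ∈ s, X v} ≤
      Ideal.span ((X · ^ 2) '' s) ⊔ Ideal.span T * Ideal.span {∏ v ∈ s, X v} := by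
  rintro p ⟨hpT, hpω⟩
  obtain ⟨c, rfl⟩ := Ideal.mem_span_singleton.mp hpω
  rw [← sub_add_cancel ((∏ v ∈ s, X v) * c) (multilinearComponent s ((∏ v ∈ s, X v) * c))]
  exact add_mem (Ideal.mem_sup_left (prod_X_mul_sub_multilinearComponent_mem s c))
    (Ideal.mem_sup_right (multilinearComponent_mem_span_mul_of_mem s hT hpT))

end MvPolynomial

theorem Ideal.sup_inf_sup_eq_sup_mul {A : Type*} [CommRing A] {F I J : Ideal A}
    (h : J ⊓ (F ⊔ I) ≤ F ⊔ I * J) : (F ⊔ I) ⊓ (F ⊔ J) = F ⊔ I * J := by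
  refine le_antisymm ?_ ?_
  · rw [inf_comm, sup_inf_assoc_of_le _ le_sup_left]
    exact sup_le le_sup_left h
  · exact sup_le (le_inf le_sup_left le_sup_left)
      (le_inf (Ideal.mul_le_left.trans le_sup_right) (Ideal.mul_le_right.trans le_sup_right))

namespace BEI

variable {k : Type*} [CommRing k] {n : ℕ}

theorem frobPow_span {A : Type*} [CommSemiring A] (p : ℕ) [ExpChar A p] (T : Set A) :
    frobPow (Ideal.span T) p = Ideal.span ((· ^ p) '' T) :=
  Ideal.map_span (frobenius A p) T

theorem omegaA_eq_prod_X (A : Finset (Fin n)) :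
    omegaA (k := k) A = ∏ v ∈ A.disjSum A, X v := by
  rw [Finset.prod_disjSum, ← Finset.prod_mul_distrib]
  rfl

theorem frobPow_PAB_two [CharP k 2] (A B : Finset (Fin n)) :
    frobPow (PAB (k := k) A B) 2 =
      Ideal.span ((X · ^ 2) '' ↑(A.disjSum A)) ⊔
        Ideal.span ((· ^ 2) '' {g | ∃ a ∈ B, ∃ b ∈ B, a ≠ b ∧ g = fb (k := k) a b}) := by
  have hgen : {g : Ring' k n | ∃ i ∈ A, g = xv i ∨ g = yv i} = X '' ↑(A.disjSum A) := by
    ext g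
    simp [Finset.mem_disjSum, xv, yv, and_or_left, exists_or, eq_comm]
  rw [PAB, frobPow_span, Set.image_union, Ideal.span_union, hgen, Set.image_image]

theorem fb_mem_supported {B : Finset (Fin n)} {a b : Fin n} (ha : a ∈ B) (hb : b ∈ B) :
    fb (k := k) a b ∈ supported k (B.disjSum B : Set (Fin n ⊕ Fin n)) := by
  have hX : ∀ v ∈ B.disjSum B, (X v : Ring' k n) ∈ supported k (B.disjSum B : Set _) :=
    fun v hv => Algebra.subset_adjoin ⟨v, hv, rfl⟩
  unfold fb xv yv
  exact sub_mem
    (mul_mem (hX _ (Finset.inl_mem_disjSum.mpr ha)) (hX _ (Finset.inr_mem_disjSum.mpr hb)))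
    (mul_mem (hX _ (Finset.inl_mem_disjSum.mpr hb)) (hX _ (Finset.inr_mem_disjSum.mpr ha)))

theorem disjoint_vars_of_mem_supported {A B : Finset (Fin n)} (hAB : Disjoint A B)
    {g : Ring' k n} (hg : g ∈ supported k (B.disjSum B : Set (Fin n ⊕ Fin n))) :
    Disjoint g.vars (A.disjSum A) := by
  refine Finset.disjoint_of_subset_left (Finset.coe_subset.mp (mem_supported.mp hg)) ?_
  refine Finset.disjoint_left.mpr fun v hvB hvA => ?_
  rcases Finset.mem_disjSum.mp hvA with ⟨i, hi, rfl⟩ | ⟨i, hi, rfl⟩ <;>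
    exact Finset.disjoint_left.mp hAB hi (by simpa using hvB)

theorem mem_supported_disjSum_self_iff {B : Finset (Fin n)} {g : Ring' k n} :
    g ∈ supported k (B.disjSum B : Set (Fin n ⊕ Fin n)) ↔
      ∀ w ∈ g.vars, ∃ i ∈ B, w = Sum.inl i ∨ w = Sum.inr i := by
  rw [mem_supported, Set.subset_def]
  simp only [Finset.mem_coe, Finset.mem_disjSum]
  aesop

theorem span_omegaA_inf_le [CharP k 2] {A B : Finset (Fin n)} (hAB : Disjoint A B)
    {S : Set (Ring' k n)} (hS : ∀ g ∈ S, g ∈ supported k (B.disjSum B : Set (Fin n ⊕ Fin n))) :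
    Ideal.span {omegaA A} ⊓ (frobPow (PAB A B) 2 ⊔ Ideal.span S) ≤
      frobPow (PAB A B) 2 ⊔ Ideal.span S * Ideal.span {omegaA A} := by
  set J : Ideal (Ring' k n) := Ideal.span ((X · ^ 2) '' ↑(A.disjSum A))
  set G : Set (Ring' k n) := (· ^ 2) '' {g | ∃ a ∈ B, ∃ b ∈ B, a ≠ b ∧ g = fb a b}
  have hGS : ∀ g ∈ G ∪ S, Disjoint g.vars (A.disjSum A) := by
    rintro _ (⟨_, ⟨a, ha, b, hb, -, rfl⟩, rfl⟩ | hg)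
    · exact disjoint_vars_of_mem_supported hAB (pow_mem (fb_mem_supported ha hb) 2)
    · exact disjoint_vars_of_mem_supported hAB (hS _ hg)
  calc Ideal.span {omegaA A} ⊓ (frobPow (PAB A B) 2 ⊔ Ideal.span S)
      = (J ⊔ Ideal.span (G ∪ S)) ⊓ Ideal.span {∏ v ∈ A.disjSum A, X v} := by
        rw [frobPow_PAB_two, Ideal.span_union, sup_assoc, inf_comm, omegaA_eq_prod_X]
    _ ≤ J ⊔ Ideal.span (G ∪ S) * Ideal.span {∏ v ∈ A.disjSum A, X v} :=
        span_X_sq_sup_inf_span_prod_X_le _ hGS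
    _ ≤ frobPow (PAB A B) 2 ⊔ Ideal.span S * Ideal.span {omegaA A} := by
        rw [Ideal.span_union, Ideal.sup_mul, ← sup_assoc, frobPow_PAB_two, omegaA_eq_prod_X]
        exact sup_le_sup_right (sup_le_sup_left Ideal.mul_le_left _) _

/-- in characteristic `2`, with `P = P(A,B)` for disjoint `A, B` and
`Q` an ideal generated by polynomials involving only the variables `{x_i, y_i : i ∈ B}`,
one has `(P^{[2]} + Q) ∩ (P^{[2]} + (ω_A)) = P^{[2]} + Q·(ω_A)`. -/
theorem intersection_ideals (k : Type*) [Field k] [CharP k 2] (n : ℕ)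
    (A B : Finset (Fin n)) (hdisj : Disjoint A B)
    (Q : Ideal (Ring' k n))
    (hQ : ∃ S : Set (Ring' k n),
      (∀ g ∈ S, ∀ w ∈ g.vars, ∃ i ∈ B, w = Sum.inl i ∨ w = Sum.inr i) ∧
        Q = Ideal.span S) :
    (frobPow (PAB (k := k) A B) 2 ⊔ Q) ⊓
        (frobPow (PAB (k := k) A B) 2 ⊔ Ideal.span {omegaA (k := k) A})
      = frobPow (PAB (k := k) A B) 2 ⊔ Q * Ideal.span {omegaA (k := k) A} := by
  obtain ⟨S, hS, rfl⟩ := hQ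
  exact Ideal.sup_inf_sup_eq_sup_mul
    (span_omegaA_inf_le hdisj fun g hg => mem_supported_disjSum_self_iff.mpr (hS g hg))

end BEI
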